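/- For every integer n ≥ 1, every t ≥ 0 and every Δ ≥ 0, 0 ≤ K(t+Δ, n) − K(t, n) ≤ m λ n Δ; that is, t ↦ K(t,n) is nondecreasing and Lipschitz continuous with Lipschitz constant at most mλn. -/

import Mathlib

open Finset MeasureTheory intervalIntegral Real Filter

noncomputable section

/-- The CDF `F(k) = ∑_{j=1}^k f(j)` of the bundle-size pmf `f`. -/
def cdfF (f : ℕ → ℝ) (k : ℕ) : ℝ := ∑ j ∈ Finset.Icc 1 k, f j

/-- `R(t,n)`: the expected number of remaining packages at time `t` starting from `n`
packages on a line, given via its closed-form solution in terms of the constants `γ`. -/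
def Rfun (f : ℕ → ℝ) (γ : ℕ → ℕ → ℝ) (lam t : ℝ) (n : ℕ) : ℝ :=
  if 0 < cdfF f n then
    ∑ i ∈ Finset.Icc 1 n, γ n i * Real.exp (-(lam * ∑ j ∈ Finset.Icc 1 i, cdfF f j) * t)
  else (n : ℝ)

/-- `K(t,n) = n - R(t,n)`. -/
def Kfun (f : ℕ → ℝ) (γ : ℕ → ℕ → ℝ) (lam t : ℝ) (n : ℕ) : ℝ :=
  (n : ℝ) - Rfun f γ lam t n

/-!
Write `S i = ∑_{j ≤ i} F j` (`cumCdf`) and `D(t,n) = ∂ₜK(t,n) = λ ∑ᵢ γ_{n,i} S_i e^{-λ S_i t}`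
(`Kderiv`). Matching coefficients of `e^{-λ S_i t}`, the recursion defining `γ` says exactly that
`D` solves the triangular linear system `∂ₜD(t,n) = -λ S_n D(t,n) + 2λ ∑_{j ≤ n} F j D(t,n-j)`,
with `D(0,n) = λ ∑_k f k · k (n+1-k) ∈ [0, mλn]`. Nonnegativity of `D(0,n)` is the inequality
`2 ∑_j F j (n-j) ≤ n S_n`, which makes the box `[0, mλn]` invariant: by strong induction on `n`
and the integrating factor `e^{λ S_n t}`, `0 ≤ D(t,n) ≤ mλn` for all `t ≥ 0`. The mean value
inequality then bounds `K(t+Δ,n) - K(t,n)`.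
-/

lemma mul_le_sub_of_hasDerivAt {g g' : ℝ → ℝ} {L : ℝ} (hg : ∀ s, HasDerivAt g (g' s) s)
    (hL : ∀ s, 0 ≤ s → L ≤ g' s) {t Δ : ℝ} (ht : 0 ≤ t) (hΔ : 0 ≤ Δ) :
    L * Δ ≤ g (t + Δ) - g t := by
  have := (convex_Ici (0 : ℝ)).mul_sub_le_image_sub_of_le_deriv
    (fun s _ => (hg s).continuousAt.continuousWithinAt)
    (fun s _ => (hg s).differentiableAt.differentiableWithinAt)
    (fun s hs => by
      rw [interior_Ici] at hs
      rw [(hg s).deriv]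
      exact hL s (le_of_lt hs))
    t ht (t + Δ) (by simp only [Set.mem_Ici]; linarith) (by linarith)
  rwa [add_sub_cancel_left] at this

lemma le_of_hasDerivAt_eq_neg_mul_add {g h : ℝ → ℝ} {c L : ℝ}
    (hg : ∀ s, HasDerivAt g (-c * g s + h s) s) (hh : ∀ s, 0 ≤ s → c * L ≤ h s)
    (h0 : L ≤ g 0) {t : ℝ} (ht : 0 ≤ t) : L ≤ g t := by
  have hφ : ∀ s, HasDerivAt (fun s => exp (c * s) * (g s - L)) (exp (c * s) * (h s - c * L)) s :=
    fun s => (((hasDerivAt_id s).const_mul c).exp.mul ((hg s).sub_const L)).congr_deriv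
      (by simp only [id, mul_one]; ring)
  have hmono := mul_le_sub_of_hasDerivAt hφ (L := 0)
    (fun s hs => mul_nonneg (exp_pos _).le (sub_nonneg.2 (hh s hs))) le_rfl ht
  simp only [zero_mul, zero_add, mul_zero, exp_zero, one_mul, sub_nonneg] at hmono
  have : 0 ≤ exp (c * t) * (g t - L) := (sub_nonneg.2 h0).trans hmono
  linarith [(mul_nonneg_iff_of_pos_left (exp_pos (c * t))).1 this]

lemma mem_Icc_of_hasDerivAt_eq_neg_mul_add {g h : ℝ → ℝ} {c L U : ℝ}
    (hg : ∀ s, HasDerivAt g (-c * g s + h s) s)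
    (hh : ∀ s, 0 ≤ s → h s ∈ Set.Icc (c * L) (c * U))
    (h0 : g 0 ∈ Set.Icc L U) {t : ℝ} (ht : 0 ≤ t) : g t ∈ Set.Icc L U := by
  refine ⟨le_of_hasDerivAt_eq_neg_mul_add hg (fun s hs => (hh s hs).1) h0.1 ht, ?_⟩
  have := le_of_hasDerivAt_eq_neg_mul_add (g := fun s => -g s) (h := fun s => -h s) (L := -U)
    (fun s => (hg s).neg.congr_deriv (by ring)) (fun s hs => by linarith [(hh s hs).2])
    (neg_le_neg h0.2) ht
  linarith

lemma hasDerivAt_sum_mul_exp (s : Finset ℕ) (c a : ℕ → ℝ) (t : ℝ) :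
    HasDerivAt (fun t => ∑ i ∈ s, c i * exp (-a i * t))
      (∑ i ∈ s, c i * -a i * exp (-a i * t)) t := by
  refine HasDerivAt.fun_sum fun i _ => ?_
  have := ((hasDerivAt_id t).const_mul (-a i)).exp.const_mul (c i)
  simpa [mul_comm, mul_left_comm, mul_assoc] using this

def cumCdf (f : ℕ → ℝ) (n : ℕ) : ℝ := ∑ j ∈ Icc 1 n, cdfF f j

section
variable {f : ℕ → ℝ}

lemma cdfF_succ (n : ℕ) : cdfF f (n + 1) = cdfF f n + f (n + 1) :=
  sum_Icc_succ_top (by omega) f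

lemma cumCdf_succ (n : ℕ) : cumCdf f (n + 1) = cumCdf f n + cdfF f (n + 1) :=
  sum_Icc_succ_top (by omega) _

lemma cdfF_nonneg (hf : ∀ k, 0 ≤ f k) (k : ℕ) : 0 ≤ cdfF f k :=
  sum_nonneg fun j _ => hf j

lemma cdfF_mono (hf : ∀ k, 0 ≤ f k) : Monotone (cdfF f) := fun _ _ h =>
  sum_le_sum_of_subset_of_nonneg (Icc_subset_Icc_right h) fun j _ _ => hf j

lemma cumCdf_eq_zero (hf : ∀ k, 0 ≤ f k) {n i : ℕ} (hn : cdfF f n = 0) (hi : i ≤ n) :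
    cumCdf f i = 0 :=
  sum_eq_zero fun j hj => le_antisymm
    (hn ▸ cdfF_mono hf ((mem_Icc.1 hj).2.trans hi)) (cdfF_nonneg hf j)

lemma cumCdf_sub_cumCdf {i n : ℕ} (h : i ≤ n) :
    cumCdf f n - cumCdf f i = ∑ k ∈ Icc (i + 1) n, cdfF f k := by
  rw [sub_eq_iff_eq_add', cumCdf, cumCdf, Icc_add_one_left_eq_Ioc, ← zero_add 1,
    Icc_add_one_left_eq_Ioc, Icc_add_one_left_eq_Ioc, sum_Ioc_consecutive _ i.zero_le h]

lemma succ_mul_cdfF_sub_cumCdf (n : ℕ) :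
    (n + 1) * cdfF f n - cumCdf f n = ∑ k ∈ Icc 1 n, k * f k := by
  induction n with
  | zero => simp [cdfF, cumCdf]
  | succ n ih =>
    rw [cumCdf_succ, cdfF_succ, sum_Icc_succ_top (by omega), ← ih]
    push_cast
    ring

lemma sum_cdfF_mul_sub_succ (n : ℕ) :
    ∑ j ∈ Icc 1 (n + 1), cdfF f j * ((n + 1 - j : ℕ) : ℝ)
      = ∑ j ∈ Icc 1 n, cdfF f j * ((n - j : ℕ) : ℝ) + cumCdf f n := by
  rw [sum_Icc_succ_top (by omega), Nat.sub_self, Nat.cast_zero, mul_zero, add_zero, cumCdf,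
    ← sum_add_distrib]
  refine sum_congr rfl fun j hj => ?_
  rw [Nat.sub_add_comm (mem_Icc.1 hj).2]
  push_cast
  ring

lemma mul_cumCdf_sub_two_mul_sum (n : ℕ) :
    n * cumCdf f n - 2 * ∑ j ∈ Icc 1 n, cdfF f j * ((n - j : ℕ) : ℝ)
      = ∑ k ∈ Icc 1 n, f k * (k * (n + 1 - k)) := by
  induction n with
  | zero => simp [cumCdf]
  | succ n ih =>
    have hsplit : ∑ k ∈ Icc 1 n, f k * (k * ((n + 1 : ℕ) + 1 - k))
        = ∑ k ∈ Icc 1 n, f k * (k * (n + 1 - k)) + ∑ k ∈ Icc 1 n, k * f k := by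
      rw [← sum_add_distrib]
      exact sum_congr rfl fun k _ => by push_cast; ring
    rw [sum_cdfF_mul_sub_succ, cumCdf_succ, sum_Icc_succ_top (by omega), hsplit, ← ih,
      ← succ_mul_cdfF_sub_cumCdf, cdfF_succ]
    push_cast
    ring

-- A bundle of size `k` has `n + 1 - k` positions on a line of `n` packages.
lemma sum_mul_window_nonneg (hf : ∀ k, 0 ≤ f k) (n : ℕ) :
    0 ≤ ∑ k ∈ Icc 1 n, f k * (k * (n + 1 - k)) := by
  refine sum_nonneg fun k hk => mul_nonneg (hf k) (mul_nonneg k.cast_nonneg ?_)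
  have : (k : ℝ) ≤ n := by exact_mod_cast (mem_Icc.1 hk).2
  linarith

lemma sum_mul_window_le {m : ℕ} (hf : ∀ k, 0 ≤ f k) (hf_sum : ∑ k ∈ Icc 1 m, f k = 1)
    (hf_supp : ∀ k : ℕ, k = 0 ∨ m < k → f k = 0) (n : ℕ) :
    ∑ k ∈ Icc 1 n, f k * (k * (n + 1 - k)) ≤ m * n := by
  have hterm : ∀ k ∈ Icc 1 n, f k * (k * (n + 1 - k)) ≤ m * n * f k := by
    intro k hk
    have hk1 := (mem_Icc.1 hk).1
    rcases le_or_gt k m with hkm | hkm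
    · have : (k : ℝ) * (n + 1 - k) ≤ m * n := by
        have : (1 : ℝ) ≤ k := by exact_mod_cast hk1
        have : (k : ℝ) ≤ m := by exact_mod_cast hkm
        nlinarith
      nlinarith [hf k]
    · simp [hf_supp k (Or.inr hkm)]
  calc ∑ k ∈ Icc 1 n, f k * (k * (n + 1 - k)) ≤ ∑ k ∈ Icc 1 n, m * n * f k := sum_le_sum hterm
    _ = m * n * cdfF f n := by rw [← mul_sum]; rfl
    _ ≤ m * n * cdfF f (max n m) := by gcongr; exact cdfF_mono hf (le_max_left n m)
    _ = m * n := by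
      rw [cdfF, ← sum_subset (Icc_subset_Icc_right (le_max_right n m)), hf_sum, mul_one]
      intro j hj hjm
      simp only [mem_Icc] at hj hjm
      exact hf_supp j (Or.inr (by omega))

variable {γ : ℕ → ℕ → ℝ}

lemma sum_gamma_eq (hf : ∀ k, 0 ≤ f k)
    (hγ_zero : ∀ n j : ℕ, cdfF f n = 0 → 1 ≤ j → j ≤ n → γ n j = 1)
    (hγ_diag : ∀ n : ℕ, 0 < cdfF f n → γ n n = (n : ℝ) - ∑ i ∈ Icc 1 (n - 1), γ n i)
    (n : ℕ) : ∑ i ∈ Icc 1 n, γ n i = n := by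
  rcases (cdfF_nonneg hf n).eq_or_lt with hFn | hFn
  · rw [sum_congr rfl fun i hi => hγ_zero n i hFn.symm (mem_Icc.1 hi).1 (mem_Icc.1 hi).2]
    simp
  · obtain ⟨n, rfl⟩ : ∃ k, n = k + 1 := Nat.exists_eq_succ_of_ne_zero
      (by rintro rfl; simp [cdfF] at hFn)
    rw [sum_Icc_succ_top (by omega), hγ_diag _ hFn, Nat.add_sub_cancel]
    ring

lemma gamma_mul_cumCdf_sub (hf : ∀ k, 0 ≤ f k)
    (hγ_rec : ∀ n i : ℕ, 0 < cdfF f n → 1 ≤ i → i < n →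
      γ n i = 2 * (∑ j ∈ Icc 1 (n - i), cdfF f j * γ (n - j) i) /
        (∑ k ∈ Icc (i + 1) n, cdfF f k))
    {n i : ℕ} (hFn : 0 < cdfF f n) (hi : i ∈ Icc 1 n) :
    γ n i * (cumCdf f n - cumCdf f i) = 2 * ∑ j ∈ Icc 1 (n - i), cdfF f j * γ (n - j) i := by
  obtain ⟨hi1, hin⟩ := mem_Icc.1 hi
  rcases hin.lt_or_eq with hin | rfl
  · have hpos : 0 < ∑ k ∈ Icc (i + 1) n, cdfF f k := hFn.trans_le <|
      single_le_sum (fun k _ => cdfF_nonneg hf k) (mem_Icc.2 ⟨hin, le_rfl⟩)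
    rw [cumCdf_sub_cumCdf hin.le, hγ_rec n i hFn hi1 hin, div_mul_cancel₀ _ hpos.ne']
  · simp

lemma sum_gamma_mul_cumCdf_sub (hf : ∀ k, 0 ≤ f k)
    (hγ_rec : ∀ n i : ℕ, 0 < cdfF f n → 1 ≤ i → i < n →
      γ n i = 2 * (∑ j ∈ Icc 1 (n - i), cdfF f j * γ (n - j) i) /
        (∑ k ∈ Icc (i + 1) n, cdfF f k))
    {n : ℕ} (hFn : 0 < cdfF f n) (w : ℕ → ℝ) :
    ∑ i ∈ Icc 1 n, γ n i * (cumCdf f n - cumCdf f i) * w i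
      = 2 * ∑ j ∈ Icc 1 n, cdfF f j * ∑ i ∈ Icc 1 (n - j), γ (n - j) i * w i := by
  have hswap : ∑ j ∈ Icc 1 n, ∑ i ∈ Icc 1 (n - j), cdfF f j * (γ (n - j) i * w i)
      = ∑ i ∈ Icc 1 n, ∑ j ∈ Icc 1 (n - i), cdfF f j * (γ (n - j) i * w i) :=
    sum_comm' fun j i => by simp only [mem_Icc]; omega
  simp only [mul_sum, hswap]
  refine sum_congr rfl fun i hi => ?_
  rw [gamma_mul_cumCdf_sub hf hγ_rec hFn hi, mul_sum, sum_mul]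
  exact sum_congr rfl fun j _ => by ring
end

def Kderiv (f : ℕ → ℝ) (γ : ℕ → ℕ → ℝ) (lam t : ℝ) (n : ℕ) : ℝ :=
  ∑ i ∈ Icc 1 n, γ n i * (lam * cumCdf f i) * exp (-(lam * cumCdf f i) * t)

section
variable {f : ℕ → ℝ} {γ : ℕ → ℕ → ℝ} {lam : ℝ}

lemma Kderiv_eq_zero (hf : ∀ k, 0 ≤ f k) {n : ℕ} (hFn : cdfF f n = 0) (t : ℝ) :
    Kderiv f γ lam t n = 0 :=
  sum_eq_zero fun i hi => by rw [cumCdf_eq_zero hf hFn (mem_Icc.1 hi).2]; ring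

lemma hasDerivAt_Kfun (hf : ∀ k, 0 ≤ f k) (n : ℕ) (t : ℝ) :
    HasDerivAt (fun t => Kfun f γ lam t n) (Kderiv f γ lam t n) t := by
  by_cases hFn : 0 < cdfF f n
  · have hK : (fun t => Kfun f γ lam t n)
        = fun t => (n : ℝ) - ∑ i ∈ Icc 1 n, γ n i * exp (-(lam * cumCdf f i) * t) := by
      funext t
      simp only [Kfun, Rfun, if_pos hFn, cumCdf]
    rw [hK]
    refine ((hasDerivAt_sum_mul_exp (Icc 1 n) (γ n) (fun i => lam * cumCdf f i) t).const_sub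
      (n : ℝ)).congr_deriv ?_
    rw [Kderiv, ← sum_neg_distrib]
    exact sum_congr rfl fun i _ => by ring
  · have hK : (fun t => Kfun f γ lam t n) = fun _ => 0 := by
      funext t
      simp only [Kfun, Rfun, if_neg hFn, sub_self]
    rw [hK, Kderiv_eq_zero hf ((cdfF_nonneg hf n).antisymm (not_lt.1 hFn)).symm]
    exact hasDerivAt_const t 0

lemma hasDerivAt_Kderiv (hf : ∀ k, 0 ≤ f k)
    (hγ_rec : ∀ n i : ℕ, 0 < cdfF f n → 1 ≤ i → i < n →
      γ n i = 2 * (∑ j ∈ Icc 1 (n - i), cdfF f j * γ (n - j) i) /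
        (∑ k ∈ Icc (i + 1) n, cdfF f k))
    {n : ℕ} (hFn : 0 < cdfF f n) (t : ℝ) :
    HasDerivAt (fun t => Kderiv f γ lam t n)
      (-(lam * cumCdf f n) * Kderiv f γ lam t n
        + lam * (2 * ∑ j ∈ Icc 1 n, cdfF f j * Kderiv f γ lam t (n - j))) t := by
  refine (hasDerivAt_sum_mul_exp (Icc 1 n) (fun i => γ n i * (lam * cumCdf f i))
    (fun i => lam * cumCdf f i) t).congr_deriv ?_
  have key := sum_gamma_mul_cumCdf_sub hf hγ_rec hFn
    (fun i => lam * cumCdf f i * exp (-(lam * cumCdf f i) * t))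
  have hshape : ∑ j ∈ Icc 1 n, cdfF f j * Kderiv f γ lam t (n - j)
      = ∑ j ∈ Icc 1 n, cdfF f j * ∑ i ∈ Icc 1 (n - j),
          γ (n - j) i * (lam * cumCdf f i * exp (-(lam * cumCdf f i) * t)) := by
    simp only [Kderiv, mul_assoc]
  rw [hshape, ← key, Kderiv, mul_sum, mul_sum, ← sum_add_distrib]
  exact sum_congr rfl fun i _ => by ring

lemma Kderiv_zero (hf : ∀ k, 0 ≤ f k)
    (hγ_rec : ∀ n i : ℕ, 0 < cdfF f n → 1 ≤ i → i < n →
      γ n i = 2 * (∑ j ∈ Icc 1 (n - i), cdfF f j * γ (n - j) i) /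
        (∑ k ∈ Icc (i + 1) n, cdfF f k))
    (hrow : ∀ k : ℕ, ∑ i ∈ Icc 1 k, γ k i = k)
    {n : ℕ} (hFn : 0 < cdfF f n) :
    Kderiv f γ lam 0 n = lam * ∑ k ∈ Icc 1 n, f k * (k * (n + 1 - k)) := by
  have key := sum_gamma_mul_cumCdf_sub hf hγ_rec hFn fun _ => 1
  simp only [mul_one, hrow] at key
  have hmoment : ∑ i ∈ Icc 1 n, γ n i * cumCdf f i
      = n * cumCdf f n - 2 * ∑ j ∈ Icc 1 n, cdfF f j * ((n - j : ℕ) : ℝ) := by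
    calc ∑ i ∈ Icc 1 n, γ n i * cumCdf f i
        = (∑ i ∈ Icc 1 n, γ n i) * cumCdf f n
          - ∑ i ∈ Icc 1 n, γ n i * (cumCdf f n - cumCdf f i) := by
          rw [sum_mul, ← sum_sub_distrib]
          exact sum_congr rfl fun i _ => by ring
      _ = _ := by rw [hrow, key]
  rw [← mul_cumCdf_sub_two_mul_sum, ← hmoment, Kderiv, mul_sum]
  exact sum_congr rfl fun i _ => by rw [mul_zero, exp_zero]; ring

lemma Kderiv_mem_Icc {m : ℕ} (hf : ∀ k, 0 ≤ f k) (hf_sum : ∑ k ∈ Icc 1 m, f k = 1)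
    (hf_supp : ∀ k : ℕ, k = 0 ∨ m < k → f k = 0) (hlam : 0 ≤ lam)
    (hγ_rec : ∀ n i : ℕ, 0 < cdfF f n → 1 ≤ i → i < n →
      γ n i = 2 * (∑ j ∈ Icc 1 (n - i), cdfF f j * γ (n - j) i) /
        (∑ k ∈ Icc (i + 1) n, cdfF f k))
    (hrow : ∀ k : ℕ, ∑ i ∈ Icc 1 k, γ k i = k) (n : ℕ) {t : ℝ} (ht : 0 ≤ t) :
    Kderiv f γ lam t n ∈ Set.Icc 0 (m * lam * n) := by
  induction n using Nat.strong_induction_on generalizing t with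
  | _ n ih =>
  rcases (cdfF_nonneg hf n).eq_or_lt with hFn | hFn
  · rw [Kderiv_eq_zero hf hFn.symm]
    exact ⟨le_rfl, by positivity⟩
  refine mem_Icc_of_hasDerivAt_eq_neg_mul_add (hasDerivAt_Kderiv hf hγ_rec hFn)
    (fun s hs => ⟨?_, ?_⟩) ?_ ht
  · rw [mul_zero]
    refine mul_nonneg hlam (mul_nonneg zero_le_two (sum_nonneg fun j hj => ?_))
    have hj := mem_Icc.1 hj
    exact mul_nonneg (cdfF_nonneg hf j) (ih (n - j) (by omega) hs).1
  · have hinv : 2 * ∑ j ∈ Icc 1 n, cdfF f j * ((n - j : ℕ) : ℝ) ≤ n * cumCdf f n := by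
      linarith [mul_cumCdf_sub_two_mul_sum (f := f) n, sum_mul_window_nonneg hf n]
    have hstep : ∑ j ∈ Icc 1 n, cdfF f j * Kderiv f γ lam s (n - j)
        ≤ m * lam * ∑ j ∈ Icc 1 n, cdfF f j * ((n - j : ℕ) : ℝ) := by
      rw [mul_sum]
      refine sum_le_sum fun j hj => ?_
      have hj := mem_Icc.1 hj
      calc cdfF f j * Kderiv f γ lam s (n - j) ≤ cdfF f j * (m * lam * (n - j : ℕ)) :=
            mul_le_mul_of_nonneg_left (ih (n - j) (by omega) hs).2 (cdfF_nonneg hf j)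
        _ = m * lam * (cdfF f j * (n - j : ℕ)) := by ring
    have hmlam : 0 ≤ (m : ℝ) * lam := by positivity
    calc lam * (2 * ∑ j ∈ Icc 1 n, cdfF f j * Kderiv f γ lam s (n - j))
        ≤ lam * (m * lam * (2 * ∑ j ∈ Icc 1 n, cdfF f j * ((n - j : ℕ) : ℝ))) :=
          mul_le_mul_of_nonneg_left (by linarith) hlam
      _ ≤ lam * (m * lam * (n * cumCdf f n)) := by gcongr
      _ = lam * cumCdf f n * (m * lam * n) := by ring
  · rw [Kderiv_zero hf hγ_rec hrow hFn]
    exact ⟨mul_nonneg hlam (sum_mul_window_nonneg hf n), by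
      nlinarith [sum_mul_window_le hf hf_sum hf_supp n]⟩
end

theorem stmt_18_general
    (m : ℕ) (f : ℕ → ℝ)
    (hf_nonneg : ∀ k, 0 ≤ f k)
    (hf_sum : ∑ k ∈ Finset.Icc 1 m, f k = 1)
    (hf_supp : ∀ k : ℕ, k = 0 ∨ m < k → f k = 0)
    (lam : ℝ) (hlam : 0 < lam)
    (γ : ℕ → ℕ → ℝ)
    (hγ_zero : ∀ n j : ℕ, cdfF f n = 0 → 1 ≤ j → j ≤ n → γ n j = 1)
    (hγ_rec : ∀ n i : ℕ, 0 < cdfF f n → 1 ≤ i → i < n →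
      γ n i = 2 * (∑ j ∈ Finset.Icc 1 (n - i), cdfF f j * γ (n - j) i) /
        (∑ k ∈ Finset.Icc (i + 1) n, cdfF f k))
    (hγ_diag : ∀ n : ℕ, 0 < cdfF f n →
      γ n n = (n : ℝ) - ∑ i ∈ Finset.Icc 1 (n - 1), γ n i)
    (n : ℕ) (t : ℝ) (ht : 0 ≤ t) (Δ : ℝ) (hΔ : 0 ≤ Δ) :
    0 ≤ Kfun f γ lam (t + Δ) n - Kfun f γ lam t n
    ∧ Kfun f γ lam (t + Δ) n - Kfun f γ lam t n ≤ (m : ℝ) * lam * (n : ℝ) * Δ := by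
  have hrow := sum_gamma_eq hf_nonneg hγ_zero hγ_diag
  have hK := hasDerivAt_Kfun (γ := γ) (lam := lam) hf_nonneg n
  have hrate := fun s (hs : 0 ≤ s) =>
    Kderiv_mem_Icc hf_nonneg hf_sum hf_supp hlam.le hγ_rec hrow n hs
  constructor
  · simpa using mul_le_sub_of_hasDerivAt hK (fun s hs => (hrate s hs).1) ht hΔ
  · have := mul_le_sub_of_hasDerivAt (fun s => (hK s).fun_neg)
      (fun s hs => neg_le_neg (hrate s hs).2) ht hΔ
    linarith

/-- For every `n ≥ 1`, `t ≥ 0` and `Δ ≥ 0`,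
`0 ≤ K(t+Δ,n) - K(t,n) ≤ m λ n Δ`: `t ↦ K(t,n)` is nondecreasing and Lipschitz with
constant at most `mλn`. -/
theorem stmt_18
    (m : ℕ) (hm : 1 ≤ m) (f : ℕ → ℝ)
    (hf_nonneg : ∀ k, 0 ≤ f k)
    (hf_sum : ∑ k ∈ Finset.Icc 1 m, f k = 1)
    (hf_supp : ∀ k : ℕ, k = 0 ∨ m < k → f k = 0)
    (lam : ℝ) (hlam : 0 < lam)
    (γ : ℕ → ℕ → ℝ)
    (hγ_zero : ∀ n j : ℕ, cdfF f n = 0 → 1 ≤ j → j ≤ n → γ n j = 1)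
    (hγ_rec : ∀ n i : ℕ, 0 < cdfF f n → 1 ≤ i → i < n →
      γ n i = 2 * (∑ j ∈ Finset.Icc 1 (n - i), cdfF f j * γ (n - j) i) /
        (∑ k ∈ Finset.Icc (i + 1) n, cdfF f k))
    (hγ_diag : ∀ n : ℕ, 0 < cdfF f n →
      γ n n = (n : ℝ) - ∑ i ∈ Finset.Icc 1 (n - 1), γ n i)
    (n : ℕ) (hn : 1 ≤ n) (t : ℝ) (ht : 0 ≤ t) (Δ : ℝ) (hΔ : 0 ≤ Δ) :
    0 ≤ Kfun f γ lam (t + Δ) n - Kfun f γ lam t n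
    ∧ Kfun f γ lam (t + Δ) n - Kfun f γ lam t n ≤ (m : ℝ) * lam * (n : ℝ) * Δ :=
  stmt_18_general m f hf_nonneg hf_sum hf_supp lam hlam γ hγ_zero hγ_rec hγ_diag n t ht Δ hΔ
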